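/- arXiv:2602.08708 — 2 statements merged into one kernel-verified Lean document; each statement's English description precedes it below -/
import Mathlib

section
/- Let p be a STRIPS₁¹ instance on n variables, let ω be a shortest plan from s_I to s_G with state sequence t₀, …, t_k, and let i < j be indices with t_i ≠ t_j. Suppose u₁ and u₂ are two distinct states such that both {t_i, u₁}, {u₁, t_j}, {t_i, u₂} and {u₂, t_j} are bidirectional edges of Q_n(p). Then j = i + 2 and the intermediate state t_{i+1} equals u₁ or u₂; in particular ω visits u₁ or u₂. -/
/-- A literal over `n` propositional variables: a variable together with a Boolean sign. -/
abbrev Lit (n : ℕ) : Type := Fin n × Bool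

/-- A state: a truth assignment to the `n` variables. -/
abbrev State (n : ℕ) : Type := Fin n → Bool

/-- The negation of a literal. -/
def Lit.neg {n : ℕ} (l : Lit n) : Lit n := (l.1, !l.2)

/-- A literal holds in a state iff the state assigns it its sign. -/
def Holds {n : ℕ} (s : State n) (l : Lit n) : Prop := s l.1 = l.2

/-- `s ⊕ l`: the state agreeing with `s` except variable `l.1` is set to `l.2`. -/
def applyLit {n : ℕ} (s : State n) (l : Lit n) : State n :=
  Function.update s l.1 l.2

/-- A STRIPS₁¹ action (Act): a pair (precondition, effect) of literals. -/
abbrev Act (n : ℕ) : Type := Lit n × Lit n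

/-- Edge of the induced graph `Q_n(p)`. -/
def Edge {n : ℕ} (A : Finset (Act n)) (s s' : State n) : Prop :=
  ∃ a ∈ A, Holds s a.1 ∧ s' = applyLit s a.2 ∧ s' ≠ s

/-- `{s₁, s₂}` is a bidirectional edge: edges in both directions. -/
def BidirEdge {n : ℕ} (A : Finset (Act n)) (s₁ s₂ : State n) : Prop :=
  Edge A s₁ s₂ ∧ Edge A s₂ s₁

/-- The set of bidirectional edges of `Q_n(p)`, as unordered pairs of states. -/
def bidirEdges {n : ℕ} (A : Finset (Act n)) : Set (Sym2 (State n)) :=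
  {e | ∃ s₁ s₂, e = s(s₁, s₂) ∧ BidirEdge A s₁ s₂}

/-- The set of bidirectional edges of `Q_n(p)` in coordinate `v`:
the two endpoints differ exactly in the variable `v`. -/
def bidirEdgesIn {n : ℕ} (A : Finset (Act n)) (v : Fin n) : Set (Sym2 (State n)) :=
  {e | ∃ s₁ s₂, e = s(s₁, s₂) ∧ BidirEdge A s₁ s₂ ∧
    s₁ v ≠ s₂ v ∧ ∀ w : Fin n, w ≠ v → s₁ w = s₂ w}

/-- A good instance: each variable has a positive and a negative achiever
whose preconditions are not each other's negation. -/
def Good {n : ℕ} (A : Finset (Act n)) : Prop :=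
  ∀ v : Fin n, ∃ a ∈ A, ∃ b ∈ A,
    a.2 = (v, true) ∧ b.2 = (v, false) ∧ a.1 ≠ Lit.neg b.1

/-- The state obtained by applying the effects of a list of actions to `s`. -/
def execStates {n : ℕ} (s : State n) (ω : List (Act n)) : State n :=
  ω.foldl (fun t a => applyLit t a.2) s

/-- `ω` is a plan from `sI` to `sG` for the instance with actions `A`. -/
def IsPlan {n : ℕ} (A : Finset (Act n)) (sI sG : State n) (ω : List (Act n)) : Prop :=
  (∀ i : Fin ω.length, ω.get i ∈ A ∧ Holds (execStates sI (ω.take i)) (ω.get i).1) ∧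
  execStates sI ω = sG

/-- `ω` is a shortest plan from `sI` to `sG`. -/
def IsShortestPlan {n : ℕ} (A : Finset (Act n)) (sI sG : State n)
    (ω : List (Act n)) : Prop :=
  IsPlan A sI sG ω ∧ ∀ ω', IsPlan A sI sG ω' → ω.length ≤ ω'.length

/-- The plan `ω` started at `sI` visits the state `s`. -/
def Visits {n : ℕ} (sI : State n) (ω : List (Act n)) (s : State n) : Prop :=
  ∃ i ≤ ω.length, execStates sI (ω.take i) = s

section Aux
variable {n : ℕ}

lemma execStates_append (s : State n) (l₁ l₂ : List (Act n)) :
    execStates s (l₁ ++ l₂) = execStates (execStates s l₁) l₂ :=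
  List.foldl_append

lemma execStates_succ (s : State n) (ω : List (Act n)) (i : ℕ) (h : i < ω.length) :
    execStates s (ω.take (i+1)) = applyLit (execStates s (ω.take i)) (ω.get ⟨i,h⟩).2 := by
  rw [List.take_succ, List.getElem?_eq_getElem h, Option.toList_some, execStates_append]
  rfl

/-- differs exactly at `v` -/
def D1 (s s' : State n) (v : Fin n) : Prop :=
  s' v = ! s v ∧ ∀ w, w ≠ v → s' w = s w

def flip1 (s : State n) (v : Fin n) : State n := Function.update s v (! s v)

lemma edge_d1 {A : Finset (Act n)} {s s' : State n} (h : Edge A s s') : ∃ v, D1 s s' v := by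
  obtain ⟨a, _, _, heq, hne⟩ := h
  refine ⟨a.2.1, ?_, fun w hw => ?_⟩
  · subst heq
    by_cases hb : s a.2.1 = a.2.2
    · exfalso; apply hne; funext w
      by_cases hw : w = a.2.1
      · subst hw; simp [applyLit, hb]
      · exact Function.update_of_ne hw _ _
    · have h1 : applyLit s a.2 a.2.1 = a.2.2 := Function.update_self _ _ _
      rw [h1]
      cases hsv : s a.2.1 <;> cases hav : a.2.2 <;> simp_all
  · subst heq; exact Function.update_of_ne hw _ _

lemma corner {ti tj u : State n} {a b : Fin n}
    (h1 : D1 ti u a) (h2 : D1 u tj b) (hne : ti ≠ tj) :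
    a ≠ b ∧ tj a = ! ti a ∧ tj b = ! ti b ∧ (∀ w, w ≠ a → w ≠ b → tj w = ti w) ∧
      u = flip1 ti a := by
  have hu : u = flip1 ti a := by
    funext w
    by_cases hw : w = a
    · subst hw; rw [h1.1]; simp [flip1]
    · rw [h1.2 w hw]; simp [flip1, Function.update_of_ne hw]
  have hab : a ≠ b := by
    intro h; subst h
    apply hne; funext w
    by_cases hw : w = a
    · subst hw; rw [h2.1, h1.1]; simp
    · rw [h2.2 w hw, h1.2 w hw]
  refine ⟨hab, ?_, ?_, ?_, hu⟩
  · rw [h2.2 a hab, h1.1]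
  · rw [h2.1, h1.2 b (Ne.symm hab)]
  · intro w hwa hwb; rw [h2.2 w hwb, h1.2 w hwa]

lemma isPlan_append {A : Finset (Act n)} {s m g : State n} {l₁ l₂ : List (Act n)}
    (h1 : IsPlan A s m l₁) (h2 : IsPlan A m g l₂) : IsPlan A s g (l₁ ++ l₂) := by
  obtain ⟨hp1, he1⟩ := h1
  obtain ⟨hp2, he2⟩ := h2
  constructor
  · intro i
    by_cases hi : (i : ℕ) < l₁.length
    · have hg : (l₁ ++ l₂).get i = l₁.get ⟨i, hi⟩ := by
        simp [List.getElem_append_left hi]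
      have ht : (l₁ ++ l₂).take i = l₁.take i := by
        rw [List.take_append, Nat.sub_eq_zero_of_le (le_of_lt hi),
          List.take_zero, List.append_nil]
      rw [hg, ht]; exact hp1 ⟨i, hi⟩
    · push_neg at hi
      have hlt : (i:ℕ) < l₁.length + l₂.length := by simpa using i.isLt
      have hi2 : (i:ℕ) - l₁.length < l₂.length := by omega
      have hg : (l₁ ++ l₂).get i = l₂.get ⟨(i:ℕ) - l₁.length, hi2⟩ := by
        simp [List.getElem_append_right hi]
      have ht : (l₁ ++ l₂).take i = l₁ ++ l₂.take ((i:ℕ) - l₁.length) := by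
        rw [List.take_append, List.take_of_length_le hi]
      rw [hg, ht, execStates_append, he1]
      exact hp2 ⟨_, hi2⟩
  · rw [execStates_append, he1, he2]

lemma isPlan_take {A : Finset (Act n)} {sI sG : State n} {ω : List (Act n)}
    (h : IsPlan A sI sG ω) (i : ℕ) :
    IsPlan A sI (execStates sI (ω.take i)) (ω.take i) := by
  refine ⟨fun m => ?_, rfl⟩
  have hlt : (m:ℕ) < min i ω.length := by simpa using m.isLt
  have hm : (m:ℕ) < ω.length := by omega
  have hg : (ω.take i).get m = ω.get ⟨m, hm⟩ := by simp [List.getElem_take]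
  have ht : (ω.take i).take m = ω.take m := by
    rw [List.take_take]; congr 1; omega
  rw [hg, ht]; exact h.1 ⟨m, hm⟩

lemma isPlan_drop {A : Finset (Act n)} {sI sG : State n} {ω : List (Act n)}
    (h : IsPlan A sI sG ω) (j : ℕ) :
    IsPlan A (execStates sI (ω.take j)) sG (ω.drop j) := by
  refine ⟨fun m => ?_, ?_⟩
  · have hlt : (m:ℕ) < ω.length - j := by simpa using m.isLt
    have hm : j + (m:ℕ) < ω.length := by omega
    have hg : (ω.drop j).get m = ω.get ⟨j + m, hm⟩ := by
      simp [List.getElem_drop]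
    have ht : ω.take (j + m) = ω.take j ++ (ω.drop j).take m := List.take_add
    have := h.1 ⟨j + m, hm⟩
    rw [hg]
    rw [ht, execStates_append] at this
    exact this
  · rw [← execStates_append, List.take_append_drop]; exact h.2

lemma isPlan_single {A : Finset (Act n)} {s : State n} {a : Act n}
    (ha : a ∈ A) (hh : Holds s a.1) : IsPlan A s (applyLit s a.2) [a] := by
  refine ⟨fun i => ?_, rfl⟩
  fin_cases i; simpa [execStates] using ⟨ha, hh⟩

end Aux

/-- on a shortest plan, if the `i`-th and `j`-th states (`i < j`,
distinct) have two distinct common bidirectional neighbors `u₁, u₂`, then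
`j = i + 2` and the intermediate state equals `u₁` or `u₂`; in particular the
plan visits `u₁` or `u₂`. -/
theorem stmt6 {n : ℕ} (A : Finset (Act n)) (sI sG : State n) (ω : List (Act n))
    (hω : IsShortestPlan A sI sG ω) (i j : ℕ) (hij : i < j) (hj : j ≤ ω.length)
    (hne : execStates sI (ω.take i) ≠ execStates sI (ω.take j))
    (u₁ u₂ : State n) (hu : u₁ ≠ u₂)
    (h₁ : BidirEdge A (execStates sI (ω.take i)) u₁)
    (h₂ : BidirEdge A u₁ (execStates sI (ω.take j)))
    (h₃ : BidirEdge A (execStates sI (ω.take i)) u₂)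
    (h₄ : BidirEdge A u₂ (execStates sI (ω.take j))) :
    j = i + 2 ∧
      (execStates sI (ω.take (i + 1)) = u₁ ∨ execStates sI (ω.take (i + 1)) = u₂) ∧
      (Visits sI ω u₁ ∨ Visits sI ω u₂) := by
  set ti := execStates sI (ω.take i) with hti
  set tj := execStates sI (ω.take j) with htj
  -- D1 facts
  obtain ⟨va, hva⟩ := edge_d1 h₁.1
  obtain ⟨vb, hvb⟩ := edge_d1 h₂.1
  obtain ⟨vc, hvc⟩ := edge_d1 h₃.1
  obtain ⟨vd, hvd⟩ := edge_d1 h₄.1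
  obtain ⟨hab, htja, htjb, htjo, hu1⟩ := corner hva hvb hne
  obtain ⟨hcd, htjc, htjd, htjo', hu2⟩ := corner hvc hvd hne
  have hvc_mem : vc = va ∨ vc = vb := by
    by_contra hcon
    push_neg at hcon
    have h := htjo vc hcon.1 hcon.2
    rw [htjc] at h
    simp at h
  have hca : vc ≠ va := by
    intro h
    apply hu
    rw [hu1, hu2, h]
  have hcb : vc = vb := hvc_mem.resolve_left hca
  -- splice: j ≤ i + 2
  obtain ⟨a₁, ha₁A, ha₁pre, ha₁eq, -⟩ := h₁.1
  obtain ⟨a₂, ha₂A, ha₂pre, ha₂eq, -⟩ := h₂.1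
  have p1 : IsPlan A ti u₁ [a₁] := by
    have := isPlan_single ha₁A ha₁pre
    rwa [← ha₁eq] at this
  have p2 : IsPlan A u₁ tj [a₂] := by
    have := isPlan_single ha₂A ha₂pre
    rwa [← ha₂eq] at this
  have hsplice : IsPlan A sI sG (ω.take i ++ ([a₁] ++ ([a₂] ++ ω.drop j))) :=
    isPlan_append (isPlan_take hω.1 i)
      (isPlan_append p1 (isPlan_append p2 (isPlan_drop hω.1 j)))
  have hlen := hω.2 _ hsplice
  simp only [List.length_append, List.length_take, List.length_drop,
    List.length_cons, List.length_nil] at hlen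
  have hile : i ≤ ω.length := by omega
  have hji2 : j ≤ i + 2 := by
    rw [min_eq_left hile] at hlen
    omega
  -- one step changes at most one coordinate
  have step : ∀ k (hk : k < ω.length), ∀ w, w ≠ (ω.get ⟨k, hk⟩).2.1 →
      execStates sI (ω.take (k+1)) w = execStates sI (ω.take k) w := by
    intro k hk w hw
    rw [execStates_succ sI ω k hk]
    exact Function.update_of_ne hw _ _
  -- j ≠ i + 1
  have hj1 : j ≠ i + 1 := by
    intro hji
    have hk : i < ω.length := by omega
    have ha : va = (ω.get ⟨i, hk⟩).2.1 := by
      by_contra hva'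
      have := step i hk va hva'
      rw [← hji, ← htj, ← hti, htja] at this
      simp at this
    have hb : vb = (ω.get ⟨i, hk⟩).2.1 := by
      by_contra hvb'
      have := step i hk vb hvb'
      rw [← hji, ← htj, ← hti, htjb] at this
      simp at this
    exact hab (ha.trans hb.symm)
  have hji : j = i + 2 := by omega
  subst hji
  have hk1 : i < ω.length := by omega
  have hk2 : i + 1 < ω.length := by omega
  set tm := execStates sI (ω.take (i+1)) with htm
  set e := (ω.get ⟨i, hk1⟩).2.1 with he
  set f := (ω.get ⟨i+1, hk2⟩).2.1 with hf
  have hstep1 : ∀ w, w ≠ e → tm w = ti w := fun w hw => step i hk1 w hw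
  have hstep2 : ∀ w, w ≠ f → tj w = tm w := fun w hw => step (i+1) hk2 w hw
  have hmem : ∀ v : Fin n, tj v = ! ti v → v = e ∨ v = f := by
    intro v hv
    by_contra hcon
    push_neg at hcon
    have h1 := hstep1 v hcon.1
    have h2 := hstep2 v hcon.2
    rw [hv, h1] at h2
    simp at h2
  have hmid : tm = u₁ ∨ tm = u₂ := by
    rcases hmem va htja with h | h
    · -- e = va, hence f = vb
      have hbf : vb = f := by
        rcases hmem vb htjb with h' | h'
        · exact absurd (h'.trans h.symm) hab.symm
        · exact h'
      left
      rw [hu1]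
      funext w
      by_cases hw : w = va
      · rw [hw]
        have : tj va = tm va := hstep2 va (hbf ▸ hab)
        rw [← this, htja]
        simp [flip1]
      · rw [hstep1 w (by rw [← h]; exact hw)]
        simp [flip1, Function.update_of_ne hw]
    · -- f = va, hence e = vb
      have hbe : vb = e := by
        rcases hmem vb htjb with h' | h'
        · exact h'
        · exact absurd (h'.trans h.symm) hab.symm
      right
      rw [hu2, hcb]
      funext w
      by_cases hw : w = vb
      · rw [hw]
        have : tj vb = tm vb := hstep2 vb (h ▸ hab.symm)
        rw [← this, htjb]
        simp [flip1]
      · rw [hstep1 w (by rw [← hbe]; exact hw)]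
        simp [flip1, Function.update_of_ne hw]
  refine ⟨rfl, hmid, ?_⟩
  rcases hmid with h | h
  · exact Or.inl ⟨i+1, by omega, h⟩
  · exact Or.inr ⟨i+1, by omega, h⟩
end

section
/- Let p be a STRIPS₁¹ instance on n variables (n ≥ 2), let a ∈ A be an action with pre(a) equal to the negation of eff(a), and let u be any variable different from the variable of eff(a). Let p' be the instance obtained from p by removing a and adding the two actions ((u, true), eff(a)) and ((u, false), eff(a)). Then the induced graphs coincide: (s, s') is an edge of Q_n(p) if and only if (s, s') is an edge of Q_n(p'). In particular, for all states s_I, s_G and every k, there is a plan of length k from s_I to s_G in p with pairwise distinct intermediate states if and only if there is one in p'. -/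
/-- The states along `ω` started at `sI` are pairwise distinct. -/
def DistinctStates {n : ℕ} (sI : State n) (ω : List (Act n)) : Prop :=
  ∀ i j : ℕ, i ≤ ω.length → j ≤ ω.length →
    execStates sI (ω.take i) = execStates sI (ω.take j) → i = j

lemma execStates_cons {n : ℕ} (s : State n) (b : Act n) (ω : List (Act n)) :
    execStates s (b :: ω) = execStates (applyLit s b.2) ω := rfl

lemma execStates_take_succ {n : ℕ} (s : State n) (ω : List (Act n)) (i : ℕ) (hi : i < ω.length) :
    execStates s (ω.take (i+1)) = applyLit (execStates s (ω.take i)) (ω.get ⟨i, hi⟩).2 := by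
  induction ω generalizing s i with
  | nil => simp at hi
  | cons b ω ih =>
    cases i with
    | zero => rfl
    | succ i =>
      simp only [List.take_succ_cons, execStates_cons, List.get]
      exact ih _ _ (by simpa using hi)

/-- Transform a plan pointwise, using the current state. -/
def tr {n : ℕ} (f : State n → Act n → Act n) : State n → List (Act n) → List (Act n)
  | _, [] => []
  | t, b :: ω => f t b :: tr f (applyLit t b.2) ω

lemma tr_length {n : ℕ} (f : State n → Act n → Act n) (t : State n) (ω : List (Act n)) :
    (tr f t ω).length = ω.length := by
  induction ω generalizing t with
  | nil => rfl
  | cons b ω ih => simp [tr, ih]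

lemma tr_exec {n : ℕ} (f : State n → Act n → Act n) (heff : ∀ t b, (f t b).2 = b.2)
    (t : State n) (ω : List (Act n)) (i : ℕ) :
    execStates t ((tr f t ω).take i) = execStates t (ω.take i) := by
  induction ω generalizing t i with
  | nil => simp [tr]
  | cons b ω ih =>
    cases i with
    | zero => rfl
    | succ i =>
      simp only [tr, List.take_succ_cons, execStates_cons, heff]
      exact ih _ _

lemma tr_get {n : ℕ} (f : State n → Act n → Act n) (t : State n) (ω : List (Act n))
    (i : ℕ) (hi : i < ω.length) :
    (tr f t ω).get ⟨i, by rw [tr_length]; exact hi⟩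
      = f (execStates t (ω.take i)) (ω.get ⟨i, hi⟩) := by
  induction ω generalizing t i with
  | nil => simp at hi
  | cons b ω ih =>
    cases i with
    | zero => rfl
    | succ i =>
      simp only [tr, List.take_succ_cons, execStates_cons, List.get]
      exact ih _ _ (by simpa using hi)

lemma plan_transfer {n : ℕ} (A A' : Finset (Act n)) (f : State n → Act n → Act n)
    (heff : ∀ t b, (f t b).2 = b.2)
    (hf : ∀ t b, b ∈ A → Holds t b.1 → applyLit t b.2 ≠ t → f t b ∈ A' ∧ Holds t (f t b).1)
    (sI sG : State n) (ω : List (Act n)) (hplan : IsPlan A sI sG ω)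
    (hdist : DistinctStates sI ω) :
    IsPlan A' sI sG (tr f sI ω) ∧ (tr f sI ω).length = ω.length ∧
      DistinctStates sI (tr f sI ω) := by
  have hlen := tr_length f sI ω
  have hexec := tr_exec f heff sI ω
  have hnostall : ∀ (i : ℕ) (hi : i < ω.length),
      applyLit (execStates sI (ω.take i)) (ω.get ⟨i, hi⟩).2 ≠ execStates sI (ω.take i) := by
    intro i hi h
    have h2 : execStates sI (ω.take (i+1)) = execStates sI (ω.take i) := by
      rw [execStates_take_succ sI ω i hi]; exact h
    have := hdist (i+1) i hi (le_of_lt hi) h2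
    omega
  refine ⟨⟨?_, ?_⟩, hlen, ?_⟩
  · intro ⟨i, hi⟩
    have hi' : i < ω.length := by rwa [hlen] at hi
    have hg := tr_get f sI ω i hi'
    have hmem := (hplan.1 ⟨i, hi'⟩).1
    have hholds := (hplan.1 ⟨i, hi'⟩).2
    have := hf (execStates sI (ω.take i)) (ω.get ⟨i, hi'⟩) hmem hholds (hnostall i hi')
    constructor
    · rw [show (⟨i, hi⟩ : Fin (tr f sI ω).length).val = i from rfl] at *
      rw [hg]; exact this.1
    · rw [hexec i, hg]; exact this.2
  · rw [← List.take_length (l := tr f sI ω), hlen, hexec ω.length, List.take_length]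
    exact hplan.2
  · intro i j hi hj h
    rw [hexec i, hexec j] at h
    exact hdist i j (by omega) (by omega) h

lemma applyLit_ne_iff {n : ℕ} (s : State n) (l : Lit n) :
    applyLit s l ≠ s ↔ s l.1 ≠ l.2 := by
  unfold applyLit
  rw [ne_eq, Function.update_eq_self_iff, eq_comm]

/-- replacing an action whose precondition is the negation of its
effect by the two actions preconditioned on `(u,true)` and `(u,false)` (for a
variable `u` different from the effect variable) leaves the induced graph, and
hence the existence of length-`k` plans with pairwise distinct states, unchanged. -/
theorem stmt10 {n : ℕ} (hn : 2 ≤ n) (A : Finset (Act n)) (a : Act n) (ha : a ∈ A)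
    (hpre : a.1 = Lit.neg a.2) (u : Fin n) (hu : u ≠ a.2.1) :
    (∀ s s' : State n,
      Edge A s s' ↔
        Edge ((A.erase a) ∪ {(((u, true) : Lit n), a.2), (((u, false) : Lit n), a.2)}) s s') ∧
    ∀ (sI sG : State n) (k : ℕ),
      ((∃ ω, IsPlan A sI sG ω ∧ ω.length = k ∧ DistinctStates sI ω) ↔
        (∃ ω, IsPlan ((A.erase a) ∪ {(((u, true) : Lit n), a.2), (((u, false) : Lit n), a.2)})
            sI sG ω ∧ ω.length = k ∧ DistinctStates sI ω)) := by
  set A' := (A.erase a) ∪ {(((u, true) : Lit n), a.2), (((u, false) : Lit n), a.2)} with hA'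
  have hnewmem : ∀ c : Bool, (((u, c) : Lit n), a.2) ∈ A' := by
    intro c
    apply Finset.mem_union_right
    cases c <;> simp
  have hprec : ∀ t : State n, t a.2.1 ≠ a.2.2 → Holds t a.1 := by
    intro t h
    rw [hpre]
    show t a.2.1 = !a.2.2
    cases h1 : t a.2.1 <;> cases h2 : a.2.2 <;> simp_all
  constructor
  · intro s s'
    constructor
    · rintro ⟨b, hb, hh, heq, hne⟩
      by_cases hba : b = a
      · subst hba
        exact ⟨((u, s u), b.2), hnewmem (s u), rfl, heq, hne⟩
      · exact ⟨b, Finset.mem_union_left _ (Finset.mem_erase.mpr ⟨hba, hb⟩), hh, heq, hne⟩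
    · rintro ⟨b, hb, hh, heq, hne⟩
      rcases Finset.mem_union.mp hb with hb' | hb'
      · exact ⟨b, Finset.mem_erase.mp hb' |>.2, hh, heq, hne⟩
      · have hb2 : b.2 = a.2 := by
          rcases Finset.mem_insert.mp hb' with h | h
          · rw [h]
          · rw [Finset.mem_singleton.mp h]
        refine ⟨a, ha, ?_, by rw [← hb2]; exact heq, hne⟩
        apply hprec
        have : applyLit s a.2 ≠ s := by rw [← hb2, ← heq]; exact hne
        exact (applyLit_ne_iff s a.2).mp this
  · intro sI sG k
    constructor
    · rintro ⟨ω, hp, hk, hd⟩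
      have heff : ∀ (t : State n) (b : Act n),
          ((if b = a then (((u, t u) : Lit n), a.2) else b) : Act n).2 = b.2 := by
        intro t b
        split
        · next h => rw [h]
        · rfl
      obtain ⟨h1, h2, h3⟩ := plan_transfer A A'
        (fun t b => if b = a then (((u, t u) : Lit n), a.2) else b) heff
        (by
          intro t b hbA hh hne
          by_cases hba : b = a
          · subst hba
            simp only [if_pos rfl]
            exact ⟨hnewmem (t u), rfl⟩
          · simp only [if_neg hba]
            exact ⟨Finset.mem_union_left _ (Finset.mem_erase.mpr ⟨hba, hbA⟩), hh⟩)
        sI sG ω hp hd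
      exact ⟨_, h1, by rw [h2, hk], h3⟩
    · rintro ⟨ω, hp, hk, hd⟩
      have heff : ∀ (t : State n) (b : Act n),
          ((if b = (((u, true) : Lit n), a.2) ∨ b = (((u, false) : Lit n), a.2) then a else b) :
            Act n).2 = b.2 := by
        intro t b
        split
        · next h => rcases h with h | h <;> rw [h]
        · rfl
      obtain ⟨h1, h2, h3⟩ := plan_transfer A' A
        (fun t b => if b = (((u, true) : Lit n), a.2) ∨ b = (((u, false) : Lit n), a.2)
          then a else b)
        heff
        (by
          intro t b hbA' hh hne
          by_cases hb2 : b = (((u, true) : Lit n), a.2) ∨ b = (((u, false) : Lit n), a.2)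
          · simp only [if_pos hb2]
            have hb2' : b.2 = a.2 := by rcases hb2 with h | h <;> rw [h]
            refine ⟨ha, hprec t ?_⟩
            rw [hb2'] at hne
            exact (applyLit_ne_iff t a.2).mp hne
          · simp only [if_neg hb2]
            refine ⟨?_, hh⟩
            rcases Finset.mem_union.mp hbA' with h | h
            · exact Finset.mem_erase.mp h |>.2
            · exact absurd (by simpa using h) hb2)
        sI sG ω hp hd
      exact ⟨_, h1, by rw [h2, hk], h3⟩
end
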